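/- The m-th order n-dimensional Pascal tensor is a completely positive tensor. -/

import Mathlib

open Set MeasureTheory Real
open scoped Nat

/-!
Since `(i₁ + ⋯ + iₘ)! = ∫₀^∞ e^{-t} t^{i₁ + ⋯ + iₘ} dt`, the Pascal tensor is the integral over
`t > 0` of the rank-one tensors `v(t)^{⊗m}` with `v(t)ₐ = e^{-t/m} tᵃ / a!`, a nonnegative vector.
Rescaling `v(t)` into the unit cube turns this integral into a nonnegative multiple of an average,
over a finite measure, of points of the compact set `{u^{⊗m} : u ∈ [0,1]ⁿ}`. Such an average lies
in the convex hull of that set, which is compact by Carathéodory's theorem, and every point of the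
hull is a finite convex combination of tensors `u^{⊗m}` with `u ≥ 0`.
-/

section TensorPow

variable {ι R : Type*}

def tensorPow [CommMonoid R] (m : ℕ) (u : ι → R) : (Fin m → ι) → R :=
  fun idx => ∏ j, u (idx j)

theorem tensorPow_smul [CommSemiring R] (m : ℕ) (c : R) (u : ι → R) :
    tensorPow m (c • u) = c ^ m • tensorPow m u := by
  ext idx
  simp [tensorPow, Finset.prod_mul_distrib]

theorem tensorPow_zero [CommMonoidWithZero R] {m : ℕ} (hm : m ≠ 0) :
    tensorPow m (0 : ι → R) = 0 := by
  ext idx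
  simp [tensorPow, zero_pow hm]

theorem sum_tensorPow [Fintype ι] [CommSemiring R] (m : ℕ) (u : ι → R) :
    ∑ idx, tensorPow m u idx = (∑ i, u i) ^ m := by
  simp [tensorPow, ← Fintype.prod_sum]

theorem continuous_tensorPow [CommMonoid R] [TopologicalSpace R] [ContinuousMul R] (m : ℕ) :
    Continuous (tensorPow m : (ι → R) → (Fin m → ι) → R) := by
  unfold tensorPow
  fun_prop

variable [Fintype ι]

theorem inv_sum_smul_mem_Icc {u : ι → ℝ} (hu : 0 ≤ u) : (∑ i, u i)⁻¹ • u ∈ Icc 0 1 := by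
  refine ⟨smul_nonneg (inv_nonneg.2 (Fintype.sum_nonneg hu)) hu, fun i => ?_⟩
  simpa [inv_mul_eq_div] using div_le_one_of_le₀
    (Finset.single_le_sum (fun j _ => hu j) (Finset.mem_univ i)) (Fintype.sum_nonneg hu)

theorem tensorPow_eq_pow_sum_smul {m : ℕ} (hm : m ≠ 0) {u : ι → ℝ} (hu : 0 ≤ u) :
    tensorPow m u = (∑ i, u i) ^ m • tensorPow m ((∑ i, u i)⁻¹ • u) := by
  rcases eq_or_ne (∑ i, u i) 0 with h | h
  · obtain rfl : u = 0 := (Fintype.sum_eq_zero_iff_of_nonneg hu).1 h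
    simp [tensorPow_zero hm]
  · rw [← tensorPow_smul, smul_inv_smul₀ h]

end TensorPow

def IsCompletelyPositive {ι : Type*} [Fintype ι] {m : ℕ} (A : (Fin m → ι) → ℝ) : Prop :=
  ∃ (r : ℕ) (u : Fin r → ι → ℝ), (∀ k, 0 ≤ u k) ∧ A = ∑ k, tensorPow m (u k)

section CompletelyPositive

variable {ι : Type*} [Fintype ι] {m : ℕ}

theorem isCompletelyPositive_tensorPow {u : ι → ℝ} (hu : 0 ≤ u) :
    IsCompletelyPositive (tensorPow m u) :=
  ⟨1, fun _ => u, fun _ => hu, by simp⟩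

theorem IsCompletelyPositive.add {A B : (Fin m → ι) → ℝ} (hA : IsCompletelyPositive A)
    (hB : IsCompletelyPositive B) : IsCompletelyPositive (A + B) := by
  obtain ⟨r, u, hu, rfl⟩ := hA
  obtain ⟨s, v, hv, rfl⟩ := hB
  refine ⟨r + s, Fin.append u v, Fin.addCases (fun k => ?_) (fun k => ?_), by
    simp [Fin.sum_univ_add]⟩
  · simpa using hu k
  · simpa using hv k

theorem IsCompletelyPositive.smul (hm : m ≠ 0) {A : (Fin m → ι) → ℝ}
    (hA : IsCompletelyPositive A) {c : ℝ} (hc : 0 ≤ c) : IsCompletelyPositive (c • A) := by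
  obtain ⟨r, u, hu, rfl⟩ := hA
  refine ⟨r, fun k => c ^ (m⁻¹ : ℝ) • u k, fun k => smul_nonneg (by positivity) (hu k), ?_⟩
  simp only [tensorPow_smul, Finset.smul_sum, ← rpow_natCast, ← rpow_mul hc,
    inv_mul_cancel₀ (Nat.cast_ne_zero.2 hm : (m : ℝ) ≠ 0), rpow_one]

theorem IsCompletelyPositive.of_mem_convexHull (hm : m ≠ 0) {s : Set (ι → ℝ)}
    (hs : ∀ u ∈ s, 0 ≤ u) {A : (Fin m → ι) → ℝ} (hA : A ∈ convexHull ℝ (tensorPow m '' s)) :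
    IsCompletelyPositive A := by
  have hconvex : Convex ℝ {A : (Fin m → ι) → ℝ | IsCompletelyPositive A} :=
    fun _ hA _ hB _ _ ha hb _ => (hA.smul hm ha).add (hB.smul hm hb)
  refine convexHull_min ?_ hconvex hA
  rintro _ ⟨u, hu, rfl⟩
  exact isCompletelyPositive_tensorPow (hs u hu)

end CompletelyPositive

theorem isCompact_convexHull {E : Type*} [NormedAddCommGroup E] [NormedSpace ℝ E]
    [FiniteDimensional ℝ E] {K : Set E} (hK : IsCompact K) : IsCompact (convexHull ℝ K) := by
  rcases K.eq_empty_or_nonempty with rfl | ⟨k₀, hk₀⟩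
  · simp
  set D := Module.finrank ℝ E + 1
  -- Carathéodory: every point of the hull is a convex combination of `D` points of `K`.
  suffices convexHull ℝ K = (fun p : (Fin D → ℝ) × (Fin D → E) => ∑ i, p.1 i • p.2 i) ''
      (stdSimplex ℝ (Fin D) ×ˢ univ.pi fun _ => K) by
    rw [this]
    exact ((isCompact_stdSimplex _ _).prod (isCompact_univ_pi fun _ => hK)).image (by fun_prop)
  refine subset_antisymm (fun x hx => ?_) ?_
  · obtain ⟨ι, _, z, w, hzK, hz, hw₀, hw₁, rfl⟩ := eq_pos_convex_span_of_mem_convexHull hx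
    obtain ⟨e⟩ : Nonempty (ι ↪ Fin D) := Function.Embedding.nonempty_of_card_le <| by
      simpa [D] using hz.card_le_finrank_succ.trans
        (Nat.add_le_add_right (Submodule.finrank_le _) 1)
    classical
    have hw : ∀ j ∉ range e, Function.extend e w 0 j = 0 := fun j hj =>
      Function.extend_apply' _ _ _ (by simpa using hj)
    have hwe : ∀ i, w i = Function.extend e w 0 (e i) := fun i =>
      (e.injective.extend_apply _ _ _).symm
    have hze : ∀ i, z i = Function.extend e z (fun _ => k₀) (e i) := fun i =>
      (e.injective.extend_apply _ _ _).symm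
    refine ⟨(Function.extend e w 0, Function.extend e z fun _ => k₀),
      ⟨⟨fun j => ?_, ?_⟩, fun j _ => ?_⟩, ?_⟩
    · by_cases hj : j ∈ range e
      · obtain ⟨i, rfl⟩ := hj
        exact (hwe i ▸ hw₀ i).le
      · exact (hw j hj).ge
    · rw [← hw₁]
      exact (Fintype.sum_of_injective e e.injective _ _ hw hwe).symm
    · show Function.extend e z (fun _ => k₀) j ∈ K
      by_cases hj : j ∈ range e
      · obtain ⟨i, rfl⟩ := hj
        exact hze i ▸ hzK (mem_range_self i)
      · rwa [Function.extend_apply' _ _ _ (by simpa using hj)]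
    · refine (Fintype.sum_of_injective e e.injective _ _ (fun j hj => ?_) fun i => ?_).symm
      · simp [hw j hj]
      · rw [hwe, hze]
  · rintro _ ⟨⟨w, z⟩, ⟨hw, hz⟩, rfl⟩
    exact (convex_convexHull ℝ K).sum_mem (fun i _ => hw.1 i) hw.2
      fun i _ => subset_convexHull ℝ K (hz i trivial)

theorem exists_integral_eq_smul_mem_convexHull {α E : Type*} [MeasurableSpace α]
    [NormedAddCommGroup E] [NormedSpace ℝ E] [FiniteDimensional ℝ E] {μ : Measure α}
    [IsFiniteMeasure μ] {K : Set E} (hK : IsCompact K) (hK₀ : K.Nonempty) {f : α → E}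
    (hfK : ∀ᵐ x ∂μ, f x ∈ K) (hf : Integrable f μ) :
    ∃ c : ℝ, 0 ≤ c ∧ ∃ a ∈ convexHull ℝ K, ∫ x, f x ∂μ = c • a := by
  rcases eq_zero_or_neZero μ with rfl | _
  · exact ⟨0, le_rfl, hK₀.some, subset_convexHull ℝ K hK₀.some_mem, by simp⟩
  refine ⟨μ.real univ, measureReal_nonneg, ⨍ x, f x ∂μ, ?_, (measure_smul_average μ f).symm⟩
  exact (convex_convexHull ℝ K).average_mem (isCompact_convexHull hK).isClosed
    (hfK.mono fun x hx => subset_convexHull ℝ K hx) hf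

theorem isCompletelyPositive_integral_tensorPow {α ι : Type*} [MeasurableSpace α] [Fintype ι]
    {μ : Measure α} {m : ℕ} (hm : m ≠ 0) {v : α → ι → ℝ} (hv : ∀ᵐ x ∂μ, 0 ≤ v x)
    (hint : Integrable (fun x => tensorPow m (v x)) μ) :
    IsCompletelyPositive (∫ x, tensorPow m (v x) ∂μ) := by
  -- `ρ x = (∑ i, v x i) ^ m`, written through `tensorPow` so that `hint` makes it integrable.
  set ρ : α → ℝ := fun x => ∑ idx, tensorPow m (v x) idx
  set F : α → (Fin m → ι) → ℝ := fun x => tensorPow m ((∑ i, v x i)⁻¹ • v x)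
  set ν := μ.withDensity fun x => ENNReal.ofReal (ρ x)
  have hρv : ∀ x, ρ x = (∑ i, v x i) ^ m := fun x => sum_tensorPow m (v x)
  have hρ : Integrable ρ μ := integrable_finsetSum _ fun idx _ => hint.eval idx
  have hρm : AEMeasurable (fun x => ENNReal.ofReal (ρ x)) μ := hρ.1.aemeasurable.ennreal_ofReal
  have hρfin : ∀ᵐ x ∂μ, ENNReal.ofReal (ρ x) < ⊤ := ae_of_all _ fun _ => ENNReal.ofReal_lt_top
  have : IsFiniteMeasure ν := isFiniteMeasure_withDensity_ofReal hρ.2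
  have hvF : (fun x => tensorPow m (v x)) =ᵐ[μ] fun x => (ENNReal.ofReal (ρ x)).toReal • F x := by
    filter_upwards [hv] with x hx
    rw [hρv, ENNReal.toReal_ofReal (pow_nonneg (Fintype.sum_nonneg hx) m)]
    exact tensorPow_eq_pow_sum_smul hm hx
  have hFK : ∀ᵐ x ∂ν, F x ∈ tensorPow m '' Icc 0 1 :=
    (withDensity_absolutelyContinuous μ _).ae_le <|
      hv.mono fun x hx => mem_image_of_mem _ (inv_sum_smul_mem_Icc hx)
  have hF : Integrable F ν :=
    (integrable_withDensity_iff_integrable_smul₀' hρm hρfin).2 (hint.congr hvF)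
  obtain ⟨c, hc, a, ha, hFa⟩ := exists_integral_eq_smul_mem_convexHull
    (isCompact_Icc.image (continuous_tensorPow m)) ⟨_, mem_image_of_mem _ ⟨le_rfl, zero_le_one⟩⟩
    hFK hF
  rw [integral_congr_ae hvF, ← integral_withDensity_eq_integral_toReal_smul₀ hρm hρfin, hFa]
  exact (IsCompletelyPositive.of_mem_convexHull hm (fun u hu => hu.1) ha).smul hm hc

theorem integrableOn_exp_neg_mul_pow (s : ℕ) :
    IntegrableOn (fun t : ℝ => exp (-t) * t ^ s) (Ioi 0) := by
  simpa [rpow_natCast] using GammaIntegral_convergent (s := s + 1) (by positivity)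

theorem integral_exp_neg_mul_pow (s : ℕ) : ∫ t in Ioi (0 : ℝ), exp (-t) * t ^ s = s ! := by
  simpa [rpow_natCast] using (Gamma_eq_integral (s := s + 1) (by positivity)).symm.trans
    (Gamma_nat_eq_factorial s)

section Pascal

variable {m : ℕ} (n : ℕ)

noncomputable def pascalFactor (m n : ℕ) (t : ℝ) : Fin n → ℝ :=
  fun a => exp (-t / m) * t ^ (a : ℕ) / (a : ℕ)!

theorem pascalFactor_nonneg {t : ℝ} (ht : 0 ≤ t) : 0 ≤ pascalFactor m n t :=
  fun a => by unfold pascalFactor; positivity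

theorem tensorPow_pascalFactor (hm : m ≠ 0) (t : ℝ) (idx : Fin m → Fin n) :
    tensorPow m (pascalFactor m n t) idx =
      (∏ j, ((idx j : ℕ)! : ℝ))⁻¹ * (exp (-t) * t ^ ∑ j, (idx j : ℕ)) := by
  have : exp (-t / m) ^ m = exp (-t) := by
    rw [← exp_nat_mul]; field_simp
  simp only [tensorPow, pascalFactor, Finset.prod_div_distrib, Finset.prod_mul_distrib,
    Finset.prod_const, Finset.card_univ, Fintype.card_fin, this, Finset.prod_pow_eq_pow_sum]
  ring

theorem integrableOn_tensorPow_pascalFactor (hm : m ≠ 0) :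
    IntegrableOn (fun t => tensorPow m (pascalFactor m n t)) (Ioi 0) :=
  Integrable.of_eval fun idx => by
    simpa only [tensorPow_pascalFactor n hm] using (integrableOn_exp_neg_mul_pow _).const_mul _

theorem integral_tensorPow_pascalFactor (hm : m ≠ 0) :
    ∫ t in Ioi 0, tensorPow m (pascalFactor m n t) =
      fun idx => ((∑ j, (idx j : ℕ))! : ℝ) / ∏ j, ((idx j : ℕ)! : ℝ) := by
  ext idx
  rw [eval_integral (integrableOn_tensorPow_pascalFactor n hm).eval]
  simp only [tensorPow_pascalFactor n hm]
  rw [integral_const_mul, integral_exp_neg_mul_pow, inv_mul_eq_div]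

end Pascal

/-- The m-th order n-dimensional Pascal tensor is completely positive. -/
theorem pascal_tensor_cp (m n : ℕ)
    (P : (Fin m → Fin n) → ℝ)
    (hP : ∀ idx : Fin m → Fin n,
      P idx = ((∑ j, (idx j : ℕ)).factorial : ℝ) / ∏ j, ((idx j : ℕ).factorial : ℝ)) :
    ∃ (r : ℕ) (u : Fin r → Fin n → ℝ),
      (∀ k i, 0 ≤ u k i) ∧ ∀ idx, P idx = ∑ k, ∏ j, u k (idx j) := by
  rcases eq_or_ne m 0 with rfl | hm
  · exact ⟨1, fun _ _ => 1, fun _ _ => zero_le_one, fun idx => by simp [hP idx]⟩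
  obtain ⟨r, u, hu, hPu⟩ : IsCompletelyPositive P := by
    rw [funext hP, ← integral_tensorPow_pascalFactor n hm]
    exact isCompletelyPositive_integral_tensorPow hm
      (ae_restrict_of_forall_mem measurableSet_Ioi fun _ ht => pascalFactor_nonneg n (le_of_lt ht))
      (integrableOn_tensorPow_pascalFactor n hm)
  exact ⟨r, u, hu, fun idx => by simp [hPu, tensorPow]⟩
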